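/- For every positive Y−Δ consistent conductance function C on ℤ³≤0 there exists a function f : ℤ³≤0 → ℝ>0 satisfying the cube recurrence such that C^f = C, i.e. C^f_q(i,j,k) = C_q(i,j,k) for all q ∈ {a,b,c} and all (i,j,k) ∈ ℤ³≤0. In other words, the map f ↦ C^f from positive solutions of the cube recurrence to positive Y−Δ consistent conductance functions is surjective. -/

import Mathlib

open scoped BigOperators
open scoped Classical

noncomputable section

/-- Points of `ℤ³`. -/
abbrev Z3 : Type := ℤ × ℤ × ℤ

/-- The nonpositive octant `ℤ³_{≤ 0}`. -/
def oct (p : Z3) : Prop := p.1 ≤ 0 ∧ p.2.1 ≤ 0 ∧ p.2.2 ≤ 0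

/-- The coordinate sum `i + j + k`. -/
def sum3 (p : Z3) : ℤ := p.1 + p.2.1 + p.2.2

/-- A conductance function: the conductances `C_a, C_b, C_c` of the long diagonals.
The short diagonal conductances are their inverses, `c_q = 1/C_q`. -/
structure Conduct where
  Ca : Z3 → ℝ
  Cb : Z3 → ℝ
  Cc : Z3 → ℝ

namespace Conduct

/-- Positivity of a conductance function on the nonpositive octant. -/
def Pos (C : Conduct) : Prop :=
  ∀ p : Z3, oct p → 0 < C.Ca p ∧ 0 < C.Cb p ∧ 0 < C.Cc p

/-- `S(i,j,k) = C_a C_b + C_a C_c + C_b C_c` at `(i,j,k)`. -/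
def S (C : Conduct) (p : Z3) : ℝ :=
  C.Ca p * C.Cb p + C.Ca p * C.Cc p + C.Cb p * C.Cc p

/-- `Y-Δ` consistency: `C_a(i,j,k) c_a(i-1,j,k) = C_b(i,j,k) c_b(i,j-1,k)
  = C_c(i,j,k) c_c(i,j,k-1) = S(i,j,k)`, where `c_q = 1/C_q`. -/
def YD (C : Conduct) : Prop :=
  ∀ p : Z3, oct p →
    C.Ca p * (C.Ca (p + (-1, 0, 0)))⁻¹ = C.S p ∧
    C.Cb p * (C.Cb (p + (0, -1, 0)))⁻¹ = C.S p ∧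
    C.Cc p * (C.Cc (p + (0, 0, -1)))⁻¹ = C.S p

/-- `Δ(i,j,k) = C_b(i,j-1,k)C_c(i,j,k-1) + C_a(i-1,j,k)C_c(i,j,k-1) + C_a(i-1,j,k)C_b(i,j-1,k)`. -/
def Δ (C : Conduct) (p : Z3) : ℝ :=
  C.Cb (p + (0, -1, 0)) * C.Cc (p + (0, 0, -1)) +
    C.Ca (p + (-1, 0, 0)) * C.Cc (p + (0, 0, -1)) +
    C.Ca (p + (-1, 0, 0)) * C.Cb (p + (0, -1, 0))

/-- `U(i,j,k) = C_b(i,j-1,k)C_c(i,j,k-1)/Δ(i,j,k)`. -/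
def U (C : Conduct) (p : Z3) : ℝ :=
  C.Cb (p + (0, -1, 0)) * C.Cc (p + (0, 0, -1)) / C.Δ p

/-- `V(i,j,k) = C_a(i-1,j,k)C_c(i,j,k-1)/Δ(i,j,k)`. -/
def V (C : Conduct) (p : Z3) : ℝ :=
  C.Ca (p + (-1, 0, 0)) * C.Cc (p + (0, 0, -1)) / C.Δ p

/-- `W(i,j,k) = C_a(i-1,j,k)C_b(i,j-1,k)/Δ(i,j,k)`. -/
def W (C : Conduct) (p : Z3) : ℝ :=
  C.Ca (p + (-1, 0, 0)) * C.Cb (p + (0, -1, 0)) / C.Δ p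

/-- The translated conductance function `C^μ`, `C^μ_q(p) = C_q(p + μ)`. -/
def tr (C : Conduct) (μ : Z3) : Conduct :=
  ⟨fun p => C.Ca (p + μ), fun p => C.Cb (p + μ), fun p => C.Cc (p + μ)⟩

end Conduct

/-- `f : ℤ³_{≤0} → ℝ` satisfies the cube recurrence. -/
def CubeRec (f : Z3 → ℝ) : Prop :=
  ∀ p : Z3, oct p →
    f p * f (p + (-1, -1, -1)) =
      f (p + (-1, 0, 0)) * f (p + (0, -1, -1)) +
        f (p + (0, -1, 0)) * f (p + (-1, 0, -1)) +
        f (p + (0, 0, -1)) * f (p + (-1, -1, 0))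

/-- Positivity on the nonpositive octant. -/
def PosOn (f : Z3 → ℝ) : Prop := ∀ p : Z3, oct p → 0 < f p

/-- The conductance function `C^f` associated to a solution `f` of the cube recurrence. -/
def Cf (f : Z3 → ℝ) : Conduct where
  Ca p := f (p + (0, -1, 0)) * f (p + (0, 0, -1)) / (f p * f (p + (0, -1, -1)))
  Cb p := f (p + (-1, 0, 0)) * f (p + (0, 0, -1)) / (f p * f (p + (-1, 0, -1)))
  Cc p := f (p + (-1, 0, 0)) * f (p + (0, -1, 0)) / (f p * f (p + (-1, -1, 0)))

/-! ### Rhombi and their diagonals -/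

/-- Long diagonal `E_a(i,j,k) = {(i,j-1,k),(i,j,k-1)}`. -/
def Ea (p : Z3) : Sym2 Z3 := s(p + (0, -1, 0), p + (0, 0, -1))
/-- Long diagonal `E_b(i,j,k) = {(i-1,j,k),(i,j,k-1)}`. -/
def Eb (p : Z3) : Sym2 Z3 := s(p + (-1, 0, 0), p + (0, 0, -1))
/-- Long diagonal `E_c(i,j,k) = {(i-1,j,k),(i,j-1,k)}`. -/
def Ec (p : Z3) : Sym2 Z3 := s(p + (-1, 0, 0), p + (0, -1, 0))
/-- Short diagonal `e_a(i,j,k) = {(i,j,k),(i,j-1,k-1)}`. -/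
def ea (p : Z3) : Sym2 Z3 := s(p, p + (0, -1, -1))
/-- Short diagonal `e_b(i,j,k) = {(i,j,k),(i-1,j,k-1)}`. -/
def eb (p : Z3) : Sym2 Z3 := s(p, p + (-1, 0, -1))
/-- Short diagonal `e_c(i,j,k) = {(i,j,k),(i-1,j-1,k)}`. -/
def ec (p : Z3) : Sym2 Z3 := s(p, p + (-1, -1, 0))

/-- The rhombus `r_a(i,j,k)`. -/
def rhA (p : Z3) : Set Z3 := {p, p + (0, -1, 0), p + (0, 0, -1), p + (0, -1, -1)}
/-- The rhombus `r_b(i,j,k)`. -/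
def rhB (p : Z3) : Set Z3 := {p, p + (-1, 0, 0), p + (0, 0, -1), p + (-1, 0, -1)}
/-- The rhombus `r_c(i,j,k)`. -/
def rhC (p : Z3) : Set Z3 := {p, p + (-1, 0, 0), p + (0, -1, 0), p + (-1, -1, 0)}

/-! ### Initial conditions -/

/-- The data of a downward closed subset `ℒ ⊆ ℤ³_{≤0}` with finite complement.  It
determines the set of initial conditions `ℐ` and the complement `𝒰`. -/
structure LowerData where
  L : Set Z3
  sub : ∀ p ∈ L, oct p
  dc : ∀ p ∈ L, ∀ q : Z3, q ≤ p → q ∈ L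
  cofin : {p : Z3 | oct p ∧ p ∉ L}.Finite

/-- The set of initial conditions `ℐ = {p ∈ ℒ : p + (1,1,1) ∉ ℒ}`. -/
def LowerData.I (D : LowerData) : Set Z3 := {p ∈ D.L | p + (1, 1, 1) ∉ D.L}

/-- The complement `𝒰 = ℤ³_{≤0} \ ℒ`. -/
def LowerData.U (D : LowerData) : Set Z3 := {p : Z3 | oct p ∧ p ∉ D.L}

/-! ### Groves -/

/-- The set of diagonals of all rhombi contained in `I` (the edges of `Γ_ℐ`). -/
def allDiag (I : Set Z3) : Set (Sym2 Z3) :=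
  {e | ∃ p : Z3,
    (rhA p ⊆ I ∧ (e = Ea p ∨ e = ea p)) ∨
    (rhB p ⊆ I ∧ (e = Eb p ∨ e = eb p)) ∨
    (rhC p ⊆ I ∧ (e = Ec p ∨ e = ec p))}

/-- The graph on `ℤ³` with the given edge set. -/
def graphOf (E : Set (Sym2 Z3)) : SimpleGraph Z3 where
  Adj p q := p ≠ q ∧ s(p, q) ∈ E
  symm := by
    constructor
    intro p q h
    exact ⟨h.1.symm, by rw [Sym2.eq_swap]; exact h.2⟩
  loopless := by
    constructor
    intro p h
    exact h.1 rfl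

/-- The prescribed boundary vertex sets for the connectivity condition of groves, for a
given `N`. -/
def BSets (N : ℤ) : Set (Set Z3) :=
  {S | ∃ p q : ℤ, 0 > p ∧ p > q ∧ (p + q = -N - 1 ∨ p + q = -N - 2) ∧
      (S = {((0 : ℤ), p, q), (p, 0, q)} ∨ S = {(p, q, (0 : ℤ)), ((0 : ℤ), q, p)} ∨
        S = {(q, (0 : ℤ), p), (q, p, (0 : ℤ))})} ∪
  {S | ∃ p : ℤ, (2 * p = -N - 1 ∨ 2 * p = -N - 2) ∧
      S = {((0 : ℤ), p, p), (p, (0 : ℤ), p), (p, p, (0 : ℤ))}} ∪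
  {S | ∃ q : ℤ, q ≤ -N - 1 ∧
      (S = {((0 : ℤ), (0 : ℤ), q)} ∨ S = {((0 : ℤ), q, (0 : ℤ))} ∨ S = {(q, (0 : ℤ), (0 : ℤ))})}

/-- An `ℐ`-grove: a subgraph of `Γ_ℐ` (on the vertex set `ℐ`) containing exactly one diagonal
of each rhombus contained in `ℐ`, eventually all short diagonals, and with the prescribed
connectivity along the boundary. -/
structure Grove (I : Set Z3) where
  edges : Set (Sym2 Z3)
  sub : edges ⊆ allDiag I
  diagA : ∀ p : Z3, rhA p ⊆ I → Xor' (Ea p ∈ edges) (ea p ∈ edges)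
  diagB : ∀ p : Z3, rhB p ⊆ I → Xor' (Eb p ∈ edges) (eb p ∈ edges)
  diagC : ∀ p : Z3, rhC p ⊆ I → Xor' (Ec p ∈ edges) (ec p ∈ edges)
  short : ∃ N₀ : ℤ,
      (∀ p : Z3, rhA p ⊆ I → (∀ v ∈ rhA p, sum3 v < -N₀) → ea p ∈ edges) ∧
      (∀ p : Z3, rhB p ⊆ I → (∀ v ∈ rhB p, sum3 v < -N₀) → eb p ∈ edges) ∧
      (∀ p : Z3, rhC p ⊆ I → (∀ v ∈ rhC p, sum3 v < -N₀) → ec p ∈ edges)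
  conn : ∃ N₁ : ℤ, ∀ N : ℤ, N₁ ≤ N →
      (∀ S ∈ BSets N, ∀ u ∈ S, ∀ v ∈ S, (graphOf edges).Reachable u v) ∧
      (∀ v ∈ I, ∃! S : Set Z3, S ∈ BSets N ∧ ∃ u ∈ S, (graphOf edges).Reachable v u)

/-- The weight `w(G)` of a grove: the product of the conductances of the long diagonals
occurring in `G` (a finite product). -/
def wt (C : Conduct) {I : Set Z3} (G : Grove I) : ℝ :=
  ∏ᶠ p : Z3,
    ((if Ea p ∈ G.edges then C.Ca p else 1) * (if Eb p ∈ G.edges then C.Cb p else 1) *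
      (if Ec p ∈ G.edges then C.Cc p else 1))

/-- The partition function `Z_ℐ = ∑_{G ∈ 𝒢(ℐ)} w(G)`. -/
def Zf (C : Conduct) (D : LowerData) : ℝ := ∑' G : Grove D.I, wt C G

/-- The Boltzmann probability measure `ℙ^C_ℐ(G) = w(G)/Z_ℐ`. -/
def prb (C : Conduct) (D : LowerData) (G : Grove D.I) : ℝ := wt C G / Zf C D

/-- The probability that a given edge occurs in a random `ℐ`-grove. -/
def edgeProb (C : Conduct) (D : LowerData) (e : Sym2 Z3) : ℝ :=
  (∑' G : Grove D.I, if e ∈ G.edges then wt C G else 0) / Zf C D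

/-- The degree of a vertex in a grove. -/
def deg {I : Set Z3} (G : Grove I) (v : Z3) : ℕ :=
  {e : Sym2 Z3 | e ∈ G.edges ∧ v ∈ e}.ncard

/-- `m_g(G) = ∏_{(i,j,k) ∈ ℐ} g(i,j,k)^(deg(i,j,k) - 2)` (a finite product). -/
def mWt (g : Z3 → ℝ) (D : LowerData) (G : Grove D.I) : ℝ :=
  ∏ᶠ p ∈ D.I, g p ^ ((deg G p : ℤ) - 2)

/-- The generalized cube recurrence (the extension equations on `𝒰`). -/
def GenRec (C : Conduct) (D : LowerData) (g : Z3 → ℝ) : Prop :=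
  ∀ p ∈ D.U, g p * g (p + (-1, -1, -1)) =
    C.U p * (g (p + (-1, 0, 0)) * g (p + (0, -1, -1))) +
    C.V p * (g (p + (0, -1, 0)) * g (p + (-1, 0, -1))) +
    C.W p * (g (p + (0, 0, -1)) * g (p + (-1, -1, 0)))

/-! ### Standard initial conditions -/

lemma stdFin (n : ℤ) : {p : Z3 | oct p ∧ ¬ (sum3 p ≤ 1 - n)}.Finite := by
  apply Set.Finite.subset (Set.finite_Icc ((1 - n, 1 - n, 1 - n) : Z3) ((0, 0, 0) : Z3))
  rintro ⟨a, b, c⟩ ⟨hoct, hs⟩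
  simp only [oct, sum3, not_le] at hoct hs
  simp only [Set.mem_Icc, Prod.mk_le_mk]
  omega

/-- The standard initial conditions of order `n`, determined by
`ℒ = {(i,j,k) ∈ ℤ³_{≤0} : i+j+k ≤ 1-n}`. -/
def stdD (n : ℤ) : LowerData where
  L := {p : Z3 | oct p ∧ sum3 p ≤ 1 - n}
  sub := fun _ hp => hp.1
  dc := by
    rintro ⟨a, b, c⟩ hp ⟨x, y, z⟩ hq
    simp only [Set.mem_setOf_eq, oct, sum3, Prod.mk_le_mk] at hp hq ⊢
    omega
  cofin := by
    apply (stdFin n).subset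
    rintro p ⟨hoct, hnot⟩
    exact ⟨hoct, fun hle => hnot ⟨hoct, hle⟩⟩

/-! ### Canonical edge probabilities and creation rates -/

/-- The edge probability `p(i,j,k)` of the long diagonal `E_a(i,j,k)`, computed with the
standard initial conditions whose set of initial conditions contains `r_a(i,j,k)` (the
probability does not depend on this choice). -/
def pA (C : Conduct) (p : Z3) : ℝ := edgeProb C (stdD (1 - sum3 p)) (Ea p)

/-- The edge probability `q(i,j,k)` of the long diagonal `E_b(i,j,k)`. -/
def pB (C : Conduct) (p : Z3) : ℝ := edgeProb C (stdD (1 - sum3 p)) (Eb p)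

/-- The edge probability `r(i,j,k)` of the long diagonal `E_c(i,j,k)`. -/
def pC (C : Conduct) (p : Z3) : ℝ := edgeProb C (stdD (1 - sum3 p)) (Ec p)

/-- The creation rate `E(i,j,k) = 1 - p(i,j,k) - q(i,j,k) - r(i,j,k)`. -/
def crE (C : Conduct) (p : Z3) : ℝ := 1 - pA C p - pB C p - pC C p

/-! ### Generating functions -/

/-- The generating function `∑ p(-i,-j,-k) x^i y^j z^k` for the edge probabilities `p`. -/
def genP (C : Conduct) : MvPowerSeries (Fin 3) ℝ :=
  fun d => pA C (-(d 0 : ℤ), -(d 1 : ℤ), -(d 2 : ℤ))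

/-- The generating function `∑ q(-i,-j,-k) x^i y^j z^k` for the edge probabilities `q`. -/
def genQ (C : Conduct) : MvPowerSeries (Fin 3) ℝ :=
  fun d => pB C (-(d 0 : ℤ), -(d 1 : ℤ), -(d 2 : ℤ))

/-- The generating function `∑ r(-i,-j,-k) x^i y^j z^k` for the edge probabilities `r`. -/
def genR (C : Conduct) : MvPowerSeries (Fin 3) ℝ :=
  fun d => pC C (-(d 0 : ℤ), -(d 1 : ℤ), -(d 2 : ℤ))

/-- The creation rate generating function `F(x,y,z) = ∑ E(-i,-j,-k) x^i y^j z^k`. -/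
def genF (C : Conduct) : MvPowerSeries (Fin 3) ℝ :=
  fun d => crE C (-(d 0 : ℤ), -(d 1 : ℤ), -(d 2 : ℤ))

/-- The formal power series `x_i/(1-x_i) = ∑_{k ≥ 1} x_i^k`. -/
def geomS (i : Fin 3) : MvPowerSeries (Fin 3) ℝ :=
  fun d => if d = Finsupp.single i (d i) ∧ 1 ≤ d i then 1 else 0

/-!
Write `f = exp φ`. The condition `C^f = C` prescribes the mixed second differences of `φ`,
e.g. `φ(p - e₂) + φ(p - e₃) - φ(p) - φ(p - e₂ - e₃) = log C_a(p)`, and Y-Δ consistency says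
precisely that `log C_a`, `log C_b`, `log C_c` have the common first difference `log S` in the
directions `e₁`, `e₂`, `e₃`, which is the compatibility condition for these equations. So `φ` can
be integrated explicitly: it is the sum of `log S` over the box `(p, 0]` minus the sums of
`log C_a`, `log C_b`, `log C_c` over the faces of that box in the planes `i = 0`, `j = 0`, `k = 0`.

The cube recurrence then comes for free: for any positive `f`, clearing denominators in the
Y-Δ relation `C^f_a(p) = S^f(p) C^f_a(p - e₁)` leaves exactly the cube recurrence at `p`.
-/

open Finset

lemma Int.sum_Ioc_sub_one_left {M : Type*} [AddCommMonoid M] (g : ℤ → M) {i b : ℤ}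
    (hib : i ≤ b) : ∑ x ∈ Ioc (i - 1) b, g x = g i + ∑ x ∈ Ioc i b, g x := by
  rw [show Ioc (i - 1) b = insert i (Ioc i b) by ext x; simp only [mem_Ioc, mem_insert]; omega,
    sum_insert (by simp)]

lemma Int.sum_Ioc_sub {M : Type*} [AddCommGroup M] (h : ℤ → M) {i b : ℤ} (hib : i ≤ b) :
    ∑ x ∈ Ioc i b, (h x - h (x - 1)) = h b - h i := by
  induction i, hib using Int.leInductionDown with
  | base => simp
  | pred n hn ih => rw [Int.sum_Ioc_sub_one_left _ hn, ih]; abel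

lemma oct.add {p q : Z3} (hp : oct p) (hq : oct q) : oct (p + q) :=
  ⟨add_nonpos hp.1 hq.1, add_nonpos hp.2.1 hq.2.1, add_nonpos hp.2.2 hq.2.2⟩

def boxSum (g : ℤ → ℤ → ℝ) (j k : ℤ) : ℝ := ∑ y ∈ Ioc j 0, ∑ z ∈ Ioc k 0, g y z

namespace Conduct

variable {C : Conduct}

lemma YD.log_S (hpos : C.Pos) (hyd : C.YD) {i j k : ℤ} (hp : oct (i, j, k)) :
    Real.log (C.S (i, j, k)) = Real.log (C.Ca (i, j, k)) - Real.log (C.Ca (i - 1, j, k)) ∧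
    Real.log (C.S (i, j, k)) = Real.log (C.Cb (i, j, k)) - Real.log (C.Cb (i, j - 1, k)) ∧
    Real.log (C.S (i, j, k)) = Real.log (C.Cc (i, j, k)) - Real.log (C.Cc (i, j, k - 1)) := by
  obtain ⟨ha, hb, hc⟩ := hyd _ hp
  simp only [Prod.mk_add_mk, add_zero, ← sub_eq_add_neg] at ha hb hc
  obtain ⟨ha₀, hb₀, hc₀⟩ := hpos _ hp
  have ha₁ := (hpos (i - 1, j, k) ⟨by linarith [hp.1], hp.2⟩).1
  have hb₁ := (hpos (i, j - 1, k) ⟨hp.1, by linarith [hp.2.1], hp.2.2⟩).2.1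
  have hc₁ := (hpos (i, j, k - 1) ⟨hp.1, hp.2.1, by linarith [hp.2.2]⟩).2.2
  refine ⟨?_, ?_, ?_⟩
  · rw [← ha, ← div_eq_mul_inv, Real.log_div ha₀.ne' ha₁.ne']
  · rw [← hb, ← div_eq_mul_inv, Real.log_div hb₀.ne' hb₁.ne']
  · rw [← hc, ← div_eq_mul_inv, Real.log_div hc₀.ne' hc₁.ne']

def logPotential (C : Conduct) : Z3 → ℝ
  | (i, j, k) =>
    ∑ x ∈ Ioc i 0, boxSum (fun y z => Real.log (C.S (x, y, z))) j k
      - boxSum (fun y z => Real.log (C.Ca (0, y, z))) j k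
      - boxSum (fun x z => Real.log (C.Cb (x, 0, z))) i k
      - boxSum (fun x y => Real.log (C.Cc (x, y, 0))) i j

lemma logPotential_mixed_diff_a (hpos : C.Pos) (hyd : C.YD) {i j k : ℤ} (hp : oct (i, j, k)) :
    C.logPotential (i, j - 1, k) + C.logPotential (i, j, k - 1) - C.logPotential (i, j, k)
      - C.logPotential (i, j - 1, k - 1) = Real.log (C.Ca (i, j, k)) := by
  obtain ⟨hi, hj, hk⟩ := hp
  have htel : ∑ x ∈ Ioc i 0, Real.log (C.S (x, j, k)) =
      Real.log (C.Ca (0, j, k)) - Real.log (C.Ca (i, j, k)) := by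
    rw [← Int.sum_Ioc_sub (fun x => Real.log (C.Ca (x, j, k))) hi]
    exact sum_congr rfl fun x hx => (hyd.log_S hpos ⟨(mem_Ioc.1 hx).2, hj, hk⟩).1
  simp only [logPotential, boxSum, Int.sum_Ioc_sub_one_left _ hj,
    Int.sum_Ioc_sub_one_left _ hk, sum_add_distrib]
  linear_combination -htel

lemma logPotential_mixed_diff_b (hpos : C.Pos) (hyd : C.YD) {i j k : ℤ} (hp : oct (i, j, k)) :
    C.logPotential (i - 1, j, k) + C.logPotential (i, j, k - 1) - C.logPotential (i, j, k)
      - C.logPotential (i - 1, j, k - 1) = Real.log (C.Cb (i, j, k)) := by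
  obtain ⟨hi, hj, hk⟩ := hp
  have htel : ∑ y ∈ Ioc j 0, Real.log (C.S (i, y, k)) =
      Real.log (C.Cb (i, 0, k)) - Real.log (C.Cb (i, j, k)) := by
    rw [← Int.sum_Ioc_sub (fun y => Real.log (C.Cb (i, y, k))) hj]
    exact sum_congr rfl fun y hy =>
      (hyd.log_S hpos (show oct (i, y, k) from ⟨hi, (mem_Ioc.1 hy).2, hk⟩)).2.1
  simp only [logPotential, boxSum, Int.sum_Ioc_sub_one_left _ hi,
    Int.sum_Ioc_sub_one_left _ hk, sum_add_distrib]
  linear_combination -htel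

lemma logPotential_mixed_diff_c (hpos : C.Pos) (hyd : C.YD) {i j k : ℤ} (hp : oct (i, j, k)) :
    C.logPotential (i - 1, j, k) + C.logPotential (i, j - 1, k) - C.logPotential (i, j, k)
      - C.logPotential (i - 1, j - 1, k) = Real.log (C.Cc (i, j, k)) := by
  obtain ⟨hi, hj, hk⟩ := hp
  have htel : ∑ z ∈ Ioc k 0, Real.log (C.S (i, j, z)) =
      Real.log (C.Cc (i, j, 0)) - Real.log (C.Cc (i, j, k)) := by
    rw [← Int.sum_Ioc_sub (fun z => Real.log (C.Cc (i, j, z))) hk]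
    exact sum_congr rfl fun z hz =>
      (hyd.log_S hpos (show oct (i, j, z) from ⟨hi, hj, (mem_Ioc.1 hz).2⟩)).2.2
  simp only [logPotential, boxSum, Int.sum_Ioc_sub_one_left _ hi,
    Int.sum_Ioc_sub_one_left _ hj, sum_add_distrib]
  linear_combination -htel

lemma YD.congr {C' : Conduct} (hyd : C.YD)
    (h : ∀ p, oct p → C'.Ca p = C.Ca p ∧ C'.Cb p = C.Cb p ∧ C'.Cc p = C.Cc p) : C'.YD := by
  intro p hp
  obtain ⟨ha, hb, hc⟩ := h p hp
  have ha₁ := (h _ (hp.add (q := (-1, 0, 0)) (by norm_num [oct]))).1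
  have hb₁ := (h _ (hp.add (q := (0, -1, 0)) (by norm_num [oct]))).2.1
  have hc₁ := (h _ (hp.add (q := (0, 0, -1)) (by norm_num [oct]))).2.2
  simpa only [S, ha, hb, hc, ha₁, hb₁, hc₁] using hyd p hp

end Conduct

lemma Cf_exp (φ : Z3 → ℝ) (i j k : ℤ) :
    (Cf (Real.exp ∘ φ)).Ca (i, j, k) =
      Real.exp (φ (i, j - 1, k) + φ (i, j, k - 1) - φ (i, j, k) - φ (i, j - 1, k - 1)) ∧
    (Cf (Real.exp ∘ φ)).Cb (i, j, k) =
      Real.exp (φ (i - 1, j, k) + φ (i, j, k - 1) - φ (i, j, k) - φ (i - 1, j, k - 1)) ∧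
    (Cf (Real.exp ∘ φ)).Cc (i, j, k) =
      Real.exp (φ (i - 1, j, k) + φ (i, j - 1, k) - φ (i, j, k) - φ (i - 1, j - 1, k)) := by
  refine ⟨?_, ?_, ?_⟩ <;>
  · simp only [Cf, Function.comp_apply, Prod.mk_add_mk, add_zero, ← sub_eq_add_neg,
      Real.exp_add, Real.exp_sub]
    ring

lemma Cf_exp_logPotential {C : Conduct} (hpos : C.Pos) (hyd : C.YD) {p : Z3} (hp : oct p) :
    (Cf (Real.exp ∘ C.logPotential)).Ca p = C.Ca p ∧
    (Cf (Real.exp ∘ C.logPotential)).Cb p = C.Cb p ∧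
    (Cf (Real.exp ∘ C.logPotential)).Cc p = C.Cc p := by
  obtain ⟨i, j, k⟩ := p
  obtain ⟨ha, hb, hc⟩ := Cf_exp C.logPotential i j k
  obtain ⟨ha₀, hb₀, hc₀⟩ := hpos _ hp
  refine ⟨?_, ?_, ?_⟩
  · rw [ha, C.logPotential_mixed_diff_a hpos hyd hp, Real.exp_log ha₀]
  · rw [hb, C.logPotential_mixed_diff_b hpos hyd hp, Real.exp_log hb₀]
  · rw [hc, C.logPotential_mixed_diff_c hpos hyd hp, Real.exp_log hc₀]

lemma cubeRec_of_YD {f : Z3 → ℝ} (hf : PosOn f) (hyd : (Cf f).YD) : CubeRec f := by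
  intro p hp
  have h := (hyd p hp).1
  simp only [Conduct.S, Cf, add_assoc, Prod.mk_add_mk] at h
  norm_num at h
  have hpos : ∀ q : Z3, oct q → 0 < f (p + q) := fun q hq => hf _ (hp.add hq)
  have h1 := hpos (-1, 0, 0) (by norm_num [oct])
  have h2 := hpos (0, -1, 0) (by norm_num [oct])
  have h3 := hpos (0, 0, -1) (by norm_num [oct])
  have h12 := hpos (-1, -1, 0) (by norm_num [oct])
  have h13 := hpos (-1, 0, -1) (by norm_num [oct])
  have h23 := hpos (0, -1, -1) (by norm_num [oct])
  have h123 := hpos (-1, -1, -1) (by norm_num [oct])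
  have h0 := hf p hp
  field_simp at h
  linear_combination h

theorem statement1 (C : Conduct) (hpos : C.Pos) (hyd : C.YD) :
    ∃ f : Z3 → ℝ, PosOn f ∧ CubeRec f ∧
      ∀ p : Z3, oct p →
        (Cf f).Ca p = C.Ca p ∧ (Cf f).Cb p = C.Cb p ∧ (Cf f).Cc p = C.Cc p := by
  have hCf := fun p (hp : oct p) => Cf_exp_logPotential hpos hyd hp
  have hf : PosOn (Real.exp ∘ C.logPotential) := fun p _ => Real.exp_pos _
  exact ⟨_, hf, cubeRec_of_YD hf (hyd.congr hCf), hCf⟩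

end
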